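/- Let G be an SPTG, ℓ_min a non-urgent location of minimal price (π(ℓ_min) ≤ π(ℓ) for every location ℓ of G), and r ∈ (0,1] such that G_{ℓ_min,r} is finitely optimal. If Val_{G_{ℓ_min,r}}(ℓ_min) is affine on a non-singleton interval I ⊆ [0,r] with slope strictly greater than −π(ℓ_min), then there exists f ∈ F_G such that Val_{G_{ℓ_min,r}}(ℓ_min, ν) = f(ν) for all ν ∈ I. -/

import Mathlib

/-!
Common formalization of one-clock priced timed games (PTGs), following
"Simple Priced Timed Games are not That Simple".
-/

namespace PTGPaper

/-- The three kinds of locations: locations of player Min, of player Max, and final locations. -/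
inductive Owner : Type
  | min : Owner
  | max : Owner
  | final : Owner
deriving DecidableEq

/-- A transition of a one-clock priced timed game: a source location, a guard
(an interval with endpoints `lo`, `hi`, with openness flags `loOpen`, `hiOpen`),
a reset flag, a discrete price, and a target location. -/
structure PTrans (L : Type) where
  src : L
  lo : ℝ
  hi : ℝ
  loOpen : Bool
  hiOpen : Bool
  reset : Bool
  price : ℤ
  tgt : L

noncomputable instance {L : Type} : DecidableEq (PTrans L) := Classical.decEq _

/-- Membership of a clock value in the guard of a transition. -/
def PTrans.memGuard {L : Type} (δ : PTrans L) (ν : ℝ) : Prop :=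
  (if δ.loOpen then δ.lo < ν else δ.lo ≤ ν) ∧
  (if δ.hiOpen then ν < δ.hi else ν ≤ δ.hi)

/-- A one-clock priced timed game. -/
structure PTG where
  Loc : Type
  locFin : Fintype Loc
  locDec : DecidableEq Loc
  owner : Loc → Owner
  urgent : Loc → Bool
  M : ℕ
  trans : Finset (PTrans Loc)
  price : Loc → ℤ
  fcost : Loc → ℝ → ℝ

attribute [instance] PTG.locFin PTG.locDec

/-- A configuration: a location together with a clock valuation. -/
abbrev PTG.Config (G : PTG) := G.Loc × ℝ

/-- `G.Move s s' t δ c` holds if from configuration `s`, waiting `t` time units and then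
taking transition `δ` is legal, leads to configuration `s'` and costs `c`. -/
def PTG.Move (G : PTG) (s s' : G.Config) (t : ℝ) (δ : PTrans G.Loc) (c : ℝ) : Prop :=
  δ ∈ G.trans ∧ δ.src = s.1 ∧ 0 ≤ t ∧ (G.urgent s.1 = true → t = 0) ∧
  δ.memGuard (s.2 + t) ∧ s'.1 = δ.tgt ∧
  s'.2 = (if δ.reset then 0 else s.2 + t) ∧
  c = (δ.price : ℝ) + t * (G.price s.1 : ℝ)

/-- A finite play (history): an initial configuration followed by a list of steps,
each step consisting of a delay, the transition taken, and the configuration reached. -/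
structure Hist (L : Type) where
  start : L × ℝ
  steps : List (ℝ × PTrans L × (L × ℝ))

namespace Hist

variable {L : Type}

def lastFrom (s : L × ℝ) : List (ℝ × PTrans L × (L × ℝ)) → L × ℝ
  | [] => s
  | (_, _, s') :: rest => lastFrom s' rest

/-- The last configuration of a finite play. -/
def last (h : Hist L) : L × ℝ := lastFrom h.start h.steps

def costFrom (π : L → ℤ) (s : L × ℝ) : List (ℝ × PTrans L × (L × ℝ)) → ℝ
  | [] => 0
  | (t, δ, s') :: rest => ((δ.price : ℝ) + t * (π s.1 : ℝ)) + costFrom π s' rest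

/-- The sum of the prices of the discrete transitions along a finite play. -/
def discSum (h : Hist L) : ℤ := (h.steps.map (fun st => st.2.1.price)).sum

/-- The prefix of a finite play consisting of its first `i` steps. -/
def take (h : Hist L) (i : ℕ) : Hist L := ⟨h.start, h.steps.take i⟩

end Hist

/-- Validity of a sequence of steps, starting from a given configuration. -/
def PTG.ValidFrom (G : PTG) : G.Config → List (ℝ × PTrans G.Loc × G.Config) → Prop
  | _, [] => True
  | s, (t, δ, s') :: rest => (∃ c, G.Move s s' t δ c) ∧ G.ValidFrom s' rest

/-- A valid finite play of `G`. -/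
def PTG.HistValid (G : PTG) (h : Hist G.Loc) : Prop :=
  0 ≤ h.start.2 ∧ h.start.2 ≤ (G.M : ℝ) ∧ G.ValidFrom h.start h.steps

/-- Accumulated cost of the moves of a finite play (without any final cost). -/
def PTG.accCost (G : PTG) (h : Hist G.Loc) : ℝ := Hist.costFrom G.price h.start h.steps

/-- A (deterministic) strategy, given as a function from finite plays to
a pair (delay, transition). -/
abbrev StratFun (L : Type) := Hist L → ℝ × PTrans L

/-- A finite play is consistent with strategy `σ` of the player owning locations of kind `P`
if at every step taken from a location of that player, the move is the one prescribed
by `σ` on the corresponding prefix. -/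
def PTG.Consistent (G : PTG) (P : Owner) (σ : StratFun G.Loc) (h : Hist G.Loc) : Prop :=
  ∀ (i : ℕ) (hi : i < h.steps.length),
    G.owner (h.take i).last.1 = P →
    ((h.steps.get ⟨i, hi⟩).1, (h.steps.get ⟨i, hi⟩).2.1) = σ (h.take i)

/-- A strategy of the player owning the locations of kind `P` is valid if it proposes
a legal move after every valid finite play ending in a location of that player. -/
def PTG.StratValid (G : PTG) (P : Owner) (σ : StratFun G.Loc) : Prop :=
  ∀ h : Hist G.Loc, G.HistValid h → G.owner h.last.1 = P →
    ∃ s' c, G.Move h.last s' (σ h).1 (σ h).2 c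

def PTG.MinValid (G : PTG) (σ : StratFun G.Loc) : Prop := G.StratValid Owner.min σ

def PTG.MaxValid (G : PTG) (τ : StratFun G.Loc) : Prop := G.StratValid Owner.max τ

/-- The configuration reached from `s` by the move `td = (delay, transition)`. -/
def PTG.nextCfg (G : PTG) (s : G.Config) (td : ℝ × PTrans G.Loc) : G.Config :=
  (td.2.tgt, if td.2.reset then 0 else s.2 + td.1)

/-- The finite play of length (at most) `n` obtained from initial configuration `s₀` when
Min plays `σ` and Max plays `τ` (the play stops growing when a final location is reached). -/
def PTG.histOf (G : PTG) (σ τ : StratFun G.Loc) (s₀ : G.Config) : ℕ → Hist G.Loc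
  | 0 => ⟨s₀, []⟩
  | n + 1 =>
    let h := G.histOf σ τ s₀ n
    if G.owner h.last.1 = Owner.final then h
    else
      let td := if G.owner h.last.1 = Owner.min then σ h else τ h
      ⟨h.start, h.steps ++ [(td.1, td.2, G.nextCfg h.last td)]⟩

open Classical in
/-- The cost of the play from `s₀` determined by the profile `(σ, τ)`: `+∞` if no final
location is ever reached, and otherwise the accumulated cost up to the first visit of a
final location, plus the final cost function of that location evaluated at the current
clock value. -/
noncomputable def PTG.playCost (G : PTG) (σ τ : StratFun G.Loc) (s₀ : G.Config) : EReal :=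
  if hx : ∃ n, G.owner ((G.histOf σ τ s₀ n).last.1) = Owner.final then
    (((G.accCost (G.histOf σ τ s₀ (Nat.find hx)) +
        G.fcost ((G.histOf σ τ s₀ (Nat.find hx)).last.1)
          ((G.histOf σ τ s₀ (Nat.find hx)).last.2)) : ℝ) : EReal)
  else ⊤

/-- `Val^σ(s)`, the value of a Min strategy `σ`. -/
noncomputable def PTG.minValue (G : PTG) (σ : StratFun G.Loc) (s : G.Config) : EReal :=
  ⨆ τ : {τ : StratFun G.Loc // G.MaxValid τ}, G.playCost σ τ.1 s

/-- `Val^τ(s)`, the value of a Max strategy `τ`. -/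
noncomputable def PTG.maxValue (G : PTG) (τ : StratFun G.Loc) (s : G.Config) : EReal :=
  ⨅ σ : {σ : StratFun G.Loc // G.MinValid σ}, G.playCost σ.1 τ s

/-- The upper value of the game. -/
noncomputable def PTG.uval (G : PTG) (s : G.Config) : EReal :=
  ⨅ σ : {σ : StratFun G.Loc // G.MinValid σ}, G.minValue σ.1 s

/-- The lower value of the game. -/
noncomputable def PTG.lval (G : PTG) (s : G.Config) : EReal :=
  ⨆ τ : {τ : StratFun G.Loc // G.MaxValid τ}, G.maxValue τ.1 s

/-- The value of the game (games are determined, so this coincides with the upper value). -/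
noncomputable def PTG.val (G : PTG) (s : G.Config) : EReal := G.lval s

/-- The fake value of a Min strategy `σ` at configuration `s`: the supremum of the costs of
the plays consistent with `σ` from `s` that do reach a final location. -/
noncomputable def PTG.fakeVal (G : PTG) (σ : StratFun G.Loc) (s : G.Config) : EReal :=
  sSup {x : EReal | ∃ h : Hist G.Loc, h.start = s ∧ G.HistValid h ∧
    G.Consistent Owner.min σ h ∧ G.owner h.last.1 = Owner.final ∧
    x = (((G.accCost h + G.fcost h.last.1 h.last.2) : ℝ) : EReal)}

/-- Well-formedness of a PTG: transitions leave non-final locations only, guards are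
contained in `[0, M]`, urgent locations are non-final, final cost functions are affine with
rational coefficients, and the game is deadlock-free. -/
def PTG.WF (G : PTG) : Prop :=
  (∀ δ ∈ G.trans, G.owner δ.src ≠ Owner.final) ∧
  (∀ δ ∈ G.trans, 0 ≤ δ.lo ∧ δ.hi ≤ (G.M : ℝ)) ∧
  (∀ ℓ, G.urgent ℓ = true → G.owner ℓ ≠ Owner.final) ∧
  (∀ ℓ, G.owner ℓ = Owner.final → ∃ a b : ℚ, ∀ ν : ℝ, G.fcost ℓ ν = (a : ℝ) * ν + (b : ℝ)) ∧
  (∀ (ℓ : G.Loc) (ν : ℝ), G.owner ℓ ≠ Owner.final → 0 ≤ ν → ν ≤ (G.M : ℝ) →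
    ∃ s' t δ c, G.Move (ℓ, ν) s' t δ c)

/-- All guards have natural-number endpoints. -/
def PTG.NatEndpoints (G : PTG) : Prop :=
  ∀ δ ∈ G.trans, (∃ n : ℕ, δ.lo = (n : ℝ)) ∧ ∃ n : ℕ, δ.hi = (n : ℝ)

/-- `P_T`: the largest absolute value of a transition price. -/
def PTG.PT (G : PTG) : ℕ := G.trans.sup fun δ => δ.price.natAbs

/-- `P_L`: the largest absolute value of a location price-rate. -/
def PTG.PL (G : PTG) : ℕ := Finset.univ.sup fun ℓ : G.Loc => (G.price ℓ).natAbs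

/-- `P_f`: the largest absolute value taken by a final cost function on `[0, r]`. -/
noncomputable def PTG.Pf (G : PTG) (r : ℝ) : ℝ :=
  sSup {x : ℝ | ∃ (ℓ : G.Loc) (ν : ℝ), G.owner ℓ = Owner.final ∧ 0 ≤ ν ∧ ν ≤ r ∧
    x = |G.fcost ℓ ν|}

/-- The number of locations `|L|`. -/
def PTG.nLoc (G : PTG) : ℕ := Fintype.card G.Loc

/-- The number of final locations `|L_f|`. -/
def PTG.nFin (G : PTG) : ℕ :=
  (Finset.univ.filter fun ℓ : G.Loc => G.owner ℓ = Owner.final).card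

/-- A measure of the size of `G` (locations, transitions, and binary encodings of
the numerical constants). -/
def PTG.size (G : PTG) : ℕ :=
  G.nLoc + G.trans.card + Nat.log2 (G.M + 2) + Nat.log2 (G.PT + 2) + Nat.log2 (G.PL + 2) + 2

/-- `G` is an `r`-SPTG: every transition has guard `[0, r]` and performs no reset. -/
def PTG.IsSPTG (G : PTG) (r : ℝ) : Prop :=
  0 ≤ r ∧ r ≤ 1 ∧ ∀ δ ∈ G.trans,
    δ.lo = 0 ∧ δ.hi = r ∧ δ.loOpen = false ∧ δ.hiOpen = false ∧ δ.reset = false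

/-- The left end of the `i`-th interval determined by the points `pt` (with the convention
`ν₀ = min 0 (pt 0)`). -/
def prevPt {k : ℕ} (pt : Fin (k + 1) → ℝ) (i : Fin (k + 1)) : ℝ :=
  if (i : ℕ) = 0 then min 0 (pt 0) else
    pt ⟨(i : ℕ) - 1, lt_of_le_of_lt (Nat.sub_le _ _) i.isLt⟩

/-- A finite positional (FP) strategy of the player owning locations of kind `P` in an
`r`-SPTG: a memoryless strategy which, on each location of that player, is described by
finitely many rational threshold points `0 ≤ ν₁ < ⋯ < ν_k = r` and transitions
`δ₁, …, δ_k`, and on each induced interval either always plays immediately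
or always waits until the right endpoint of the interval. -/
structure FPStrat (G : PTG) (r : ℝ) (P : Owner) where
  strat : StratFun G.Loc
  valid : G.StratValid P strat
  memoryless : ∀ h h' : Hist G.Loc, G.HistValid h → G.HistValid h' →
    h.last = h'.last → strat h = strat h'
  points : Finset ℝ
  points_rat : ∀ p ∈ points, ∃ q : ℚ, p = (q : ℝ)
  points_mem : ∀ p ∈ points, 0 ≤ p ∧ p ≤ r
  r_mem : r ∈ points
  piecewise : ∀ ℓ : G.Loc, G.owner ℓ = P →
    ∃ (k : ℕ) (pt : Fin (k + 1) → ℝ) (δ : Fin (k + 1) → PTrans G.Loc),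
      StrictMono pt ∧ 0 ≤ pt 0 ∧ pt (Fin.last k) = r ∧ (∀ i, pt i ∈ points) ∧
      (∀ i : Fin (k + 1),
        (∀ ν : ℝ, prevPt pt i < ν → ν ≤ pt i → strat ⟨(ℓ, ν), []⟩ = (0, δ i)) ∨
        (∀ ν : ℝ, prevPt pt i < ν → ν ≤ pt i → strat ⟨(ℓ, ν), []⟩ = (pt i - ν, δ i))) ∧
      (0 < pt 0 → strat ⟨(ℓ, 0), []⟩ = (pt 0, δ 0))

/-- The size `|σ|` of an FP strategy: the number of intervals generated by its points. -/
def FPStrat.size {G : PTG} {r : ℝ} {P : Owner} (σ : FPStrat G r P) : ℕ := σ.points.card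

/-- Two clock values lie in the same interval of the partition induced by `pts`
(intervals being half-open to the left). -/
def SameInterval (pts : Finset ℝ) (ν ν' : ℝ) : Prop := ∀ p ∈ pts, (ν ≤ p ↔ ν' ≤ p)

/-- A negative cycle (NC) strategy of Min: an FP strategy such that along every consistent
finite play which starts and ends in the same location, with both clock values in the same
interval of the strategy, the sum of the prices of the discrete transitions is at most −1. -/
def FPStrat.IsNC {G : PTG} {r : ℝ} (σ : FPStrat G r Owner.min) : Prop :=
  ∀ h : Hist G.Loc, G.HistValid h → G.Consistent Owner.min σ.strat h →
    h.steps ≠ [] → h.last.1 = h.start.1 → SameInterval σ.points h.start.2 h.last.2 →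
    h.discSum ≤ -1

/-- A fake-optimal Min strategy: its fake value equals the value of the game everywhere. -/
def FPStrat.FakeOpt {G : PTG} {r : ℝ} (σ : FPStrat G r Owner.min) : Prop :=
  ∀ (ℓ : G.Loc) (ν : ℝ), 0 ≤ ν → ν ≤ r → G.fakeVal σ.strat (ℓ, ν) = G.val (ℓ, ν)

/-- An optimal Max FP strategy: its value equals the value of the game everywhere. -/
def FPStrat.Opt {G : PTG} {r : ℝ} (τ : FPStrat G r Owner.max) : Prop :=
  ∀ (ℓ : G.Loc) (ν : ℝ), 0 ≤ ν → ν ≤ r → G.maxValue τ.strat (ℓ, ν) = G.val (ℓ, ν)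

/-- A cost function on `[0, r]`: either infinite, or continuous piecewise affine with
finitely many cutpoints, all cutpoints and the values at them being rational. -/
def IsCostFunctionOn (r : ℝ) (f : ℝ → EReal) : Prop :=
  (∀ ν : ℝ, 0 ≤ ν → ν ≤ r → f ν = ⊤) ∨
  (∀ ν : ℝ, 0 ≤ ν → ν ≤ r → f ν = ⊥) ∨
  ∃ (n : ℕ) (a : Fin (n + 1) → ℚ),
    Monotone a ∧ ((a 0 : ℝ) = 0) ∧ ((a (Fin.last n) : ℝ) = r) ∧
    (∀ i, ∃ q : ℚ, f ((a i : ℚ) : ℝ) = ((q : ℝ) : EReal)) ∧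
    ∀ i : Fin n, ∃ α β : ℝ, ∀ ν : ℝ, ((a i.castSucc : ℚ) : ℝ) ≤ ν → ν ≤ ((a i.succ : ℚ) : ℝ) →
      f ν = ((α * ν + β : ℝ) : EReal)

/-- An `r`-SPTG is finitely optimal if Min has a fake-optimal NC strategy, Max has an optimal
FP strategy, and the value function of every location is a cost function. -/
def PTG.FinitelyOptimal (G : PTG) (r : ℝ) : Prop :=
  (∃ σ : FPStrat G r Owner.min, σ.IsNC ∧ σ.FakeOpt) ∧
  (∃ τ : FPStrat G r Owner.max, τ.Opt) ∧
  ∀ ℓ : G.Loc, IsCostFunctionOn r fun ν => G.val (ℓ, ν)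

/-- The finite set `F_G` of affine functions `k + φ_ℓ`, for `ℓ` final and
`k ∈ [−(|L|−1)·P_T, |L|·P_T] ∩ ℤ`. -/
def PTG.FF (G : PTG) : Set (ℝ → ℝ) :=
  {f | ∃ (ℓ : G.Loc) (k : ℤ), G.owner ℓ = Owner.final ∧
    -(((G.nLoc : ℤ) - 1) * (G.PT : ℤ)) ≤ k ∧ k ≤ (G.nLoc : ℤ) * (G.PT : ℤ) ∧
    f = fun ν => (k : ℝ) + G.fcost ℓ ν}

noncomputable def PTG.FFcard (G : PTG) : ℕ := G.FF.ncard

/-- The set of possible cutpoints: intersection points of two distinct functions of `F_G`. -/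
def PTG.posscp (G : PTG) (r : ℝ) : Set ℝ :=
  {ν | 0 ≤ ν ∧ ν ≤ r ∧ ∃ f₁ ∈ G.FF, ∃ f₂ ∈ G.FF, f₁ ≠ f₂ ∧ f₁ ν = f₂ ν}

/-- The construction `Wait(G, r, x)`: all guards are restricted to `[0, r]` and, for every
non-urgent location `ℓ`, a clone final location `ℓ^f` is added, with final cost function
`ν ↦ (r − ν)·π(ℓ) + x_ℓ`, together with a price-0 transition `(ℓ, ℓ^f)`.
(Clone locations are created for all locations; those of urgent or final locations are
unreachable since no transition leads to them.) -/
noncomputable def PTG.wait (G : PTG) (r : ℝ) (x : G.Loc → ℝ) : PTG where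
  Loc := G.Loc ⊕ G.Loc
  locFin := inferInstance
  locDec := inferInstance
  owner := Sum.elim G.owner fun _ => Owner.final
  urgent := Sum.elim G.urgent fun _ => false
  M := G.M
  trans :=
    (G.trans.image fun δ =>
      { src := Sum.inl δ.src, lo := max δ.lo 0, hi := min δ.hi r,
        loOpen := δ.loOpen, hiOpen := δ.hiOpen, reset := δ.reset,
        price := δ.price, tgt := Sum.inl δ.tgt }) ∪
    ((Finset.univ.filter fun ℓ : G.Loc =>
        G.owner ℓ ≠ Owner.final ∧ G.urgent ℓ = false).image
      fun ℓ => { src := Sum.inl ℓ, lo := 0, hi := r, loOpen := false, hiOpen := false,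
                 reset := false, price := 0, tgt := Sum.inr ℓ })
  price := Sum.elim G.price fun _ => 0
  fcost := Sum.elim G.fcost fun ℓ ν => (r - ν) * (G.price ℓ : ℝ) + x ℓ

/-- `G_r = Wait(G, r, (Val_G(ℓ, r))_ℓ)`. -/
noncomputable def PTG.Gr (G : PTG) (r : ℝ) : PTG :=
  G.wait r fun ℓ => (G.val (ℓ, r)).toReal

/-- Making the locations indicated by `S` urgent. -/
def PTG.makeUrgent (G : PTG) (S : G.Loc → Bool) : PTG :=
  { G with urgent := fun ℓ => G.urgent ℓ || S ℓ }

/-- `G_{L', r}`: the game `G_r` in which all locations of `L'` are made urgent. -/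
noncomputable def PTG.GLr (G : PTG) (S : G.Loc → Bool) (r : ℝ) : PTG :=
  (G.Gr r).makeUrgent (Sum.elim S fun _ => false)

/-- The operator `Next_{L'}(r)`: the supremum of the `r' ≤ r` such that the value functions
of `G_{L',r}` and of `G` coincide on `[r', r]`. -/
noncomputable def PTG.Next (G : PTG) (S : G.Loc → Bool) (r : ℝ) : ℝ :=
  sSup {r' : ℝ | 0 ≤ r' ∧ r' ≤ r ∧ ∀ (ℓ : G.Loc) (ν : ℝ), r' ≤ ν → ν ≤ r →
    (G.GLr S r).val (Sum.inl ℓ, ν) = G.val (ℓ, ν)}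

/-- Turning additionally location `ℓ` urgent: `L' ∪ {ℓ}` as a Boolean predicate. -/
def addLoc (G : PTG) (S : G.Loc → Bool) (ℓ : G.Loc) : G.Loc → Bool :=
  fun ℓ' => S ℓ' || decide (ℓ' = ℓ)

/-- The singleton `{ℓ}` as a Boolean predicate. -/
def singLoc (G : PTG) (ℓ : G.Loc) : G.Loc → Bool := fun ℓ' => decide (ℓ' = ℓ)

/-- `f` is, on `[0, r]`, piecewise affine with at most `N` cutpoints. -/
def PWAffineOn (r : ℝ) (f : ℝ → EReal) (N : ℕ) : Prop :=
  ∃ n : ℕ, n ≤ N ∧ ∃ a : Fin (n + 2) → ℝ,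
    Monotone a ∧ a 0 = 0 ∧ a (Fin.last (n + 1)) = r ∧
    ∀ i : Fin (n + 1), ∃ α β : ℝ, ∀ ν : ℝ, a i.castSucc ≤ ν → ν ≤ a i.succ →
      f ν = ((α * ν + β : ℝ) : EReal)

/-- `f` has a cutpoint in `[a, b)`: some point of `[a, b)` has no neighbourhood
(within `[0,1]`) on which `f` is affine. -/
def HasCutpointIn (f : ℝ → EReal) (a b : ℝ) : Prop :=
  ∃ x : ℝ, a ≤ x ∧ x < b ∧ ∀ ε : ℝ, 0 < ε →
    ¬ ∃ α β : ℝ, ∀ ν : ℝ, max 0 (x - ε) ≤ ν → ν ≤ min 1 (x + ε) →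
      f ν = ((α * ν + β : ℝ) : EReal)

/-- The endpoints of the guards of `G`, together with `0`. -/
noncomputable def PTG.endpoints (G : PTG) : Finset ℝ :=
  insert 0 ((G.trans.image PTrans.lo) ∪ (G.trans.image PTrans.hi))

/-- `s` is a region of `G`: a singleton of an endpoint, or an open interval between two
consecutive endpoints. -/
def PTG.IsRegion (G : PTG) (s : Set ℝ) : Prop :=
  (∃ e ∈ G.endpoints, s = {e}) ∨
  ∃ e ∈ G.endpoints, ∃ e' ∈ G.endpoints, e < e' ∧
    (∀ p ∈ G.endpoints, p ≤ e ∨ e' ≤ p) ∧ s = Set.Ioo e e'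

/-- No cycle of the configuration graph of `G` traverses a resetting transition. -/
def PTG.ResetAcyclic (G : PTG) : Prop :=
  ¬ ∃ h : Hist G.Loc, G.HistValid h ∧ h.steps ≠ [] ∧ h.last = h.start ∧
      ∃ st ∈ h.steps, st.2.1.reset = true

/-- An `ε`-optimal strategy of Min. -/
def PTG.MinEpsOpt (G : PTG) (σ : StratFun G.Loc) (ε : ℝ) : Prop :=
  G.MinValid σ ∧ ∀ (ℓ : G.Loc) (ν : ℝ), 0 ≤ ν → ν ≤ (G.M : ℝ) →
    G.minValue σ (ℓ, ν) ≤ G.val (ℓ, ν) + (ε : EReal)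

/-- An `ε`-optimal strategy of Max. -/
def PTG.MaxEpsOpt (G : PTG) (τ : StratFun G.Loc) (ε : ℝ) : Prop :=
  G.MaxValid τ ∧ ∀ (ℓ : G.Loc) (ν : ℝ), 0 ≤ ν → ν ≤ (G.M : ℝ) →
    G.val (ℓ, ν) - (ε : EReal) ≤ G.maxValue τ (ℓ, ν)

end PTGPaper
namespace PTGPaper

/-!
Let `σ` be a fake-optimal NC strategy of Min in `G_{ℓ_min,r}` and `[u, v] ⊆ I` an interval
containing none of the points of `σ`, so that `σ` behaves uniformly on `[u, v]`; let
`ν ∈ (u, v]`. A play from `(ℓ_min, ν)` consistent with `σ` that lets time elapse somewhere can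
be replayed from `(ℓ_min, u)`, waiting `ν - u` longer where it first waits; as every price is at
least `π(ℓ_min)`, its cost is at most `Val(ℓ_min, u) - (ν - u) π(ℓ_min) < αν + β`. A play that
never lets time elapse follows a path of transitions, and cutting out its cycles, of price at
most `-1`, does not decrease its cost. Hence `αν + β` is the cost `D + φ_f(ν)` of a simple path
ending in a final location `f`, with `|D| ≤ (|L| - 1) P_T`. Finitely many pairs `(D, f)` serve
infinitely many `ν`, so one of them serves two, and then `αν + β = D + φ_f(ν)` on all of `I`.
The clones `ℓ^f` are excluded since their final costs have slope `-π(ℓ) ≤ -π(ℓ_min) < α`.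
-/

section Paths

variable {L : Type}

theorem Hist.lastFrom_append (s : L × ℝ) (A B : List (ℝ × PTrans L × (L × ℝ))) :
    Hist.lastFrom s (A ++ B) = Hist.lastFrom (Hist.lastFrom s A) B := by
  induction A generalizing s with
  | nil => rfl
  | cons x A ih => exact ih _

theorem Hist.costFrom_append (π : L → ℤ) (s : L × ℝ) (A B : List (ℝ × PTrans L × (L × ℝ))) :
    Hist.costFrom π s (A ++ B) =
      Hist.costFrom π s A + Hist.costFrom π (Hist.lastFrom s A) B := by
  induction A generalizing s with
  | nil => simp [Hist.costFrom, Hist.lastFrom]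
  | cons x A ih =>
    obtain ⟨t, δ, s'⟩ := x
    simp only [List.cons_append, Hist.costFrom, Hist.lastFrom, ih, add_assoc]

def pathEnd : L → List (PTrans L) → L
  | ℓ, [] => ℓ
  | _, δ :: δs => pathEnd δ.tgt δs

def pathPrice (δs : List (PTrans L)) : ℤ := (δs.map PTrans.price).sum

def zeroSteps (ν : ℝ) (δs : List (PTrans L)) : List (ℝ × PTrans L × (L × ℝ)) :=
  δs.map fun δ => (0, δ, (δ.tgt, ν))

theorem pathEnd_append (ℓ : L) (A B : List (PTrans L)) :
    pathEnd ℓ (A ++ B) = pathEnd (pathEnd ℓ A) B := by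
  induction A generalizing ℓ with
  | nil => rfl
  | cons δ A ih => exact ih _

theorem pathPrice_append (A B : List (PTrans L)) :
    pathPrice (A ++ B) = pathPrice A + pathPrice B := by
  simp [pathPrice]

theorem pathPrice_cons (δ : PTrans L) (δs : List (PTrans L)) :
    pathPrice (δ :: δs) = δ.price + pathPrice δs := by
  simp [pathPrice]

theorem zeroSteps_append (ν : ℝ) (A B : List (PTrans L)) :
    zeroSteps ν (A ++ B) = zeroSteps ν A ++ zeroSteps ν B := by
  simp [zeroSteps]

theorem lastFrom_zeroSteps (ℓ : L) (ν : ℝ) (δs : List (PTrans L)) :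
    Hist.lastFrom (ℓ, ν) (zeroSteps ν δs) = (pathEnd ℓ δs, ν) := by
  induction δs generalizing ℓ with
  | nil => rfl
  | cons δ δs ih => exact ih _

theorem costFrom_zeroSteps (π : L → ℤ) (ℓ : L) (ν : ℝ) (δs : List (PTrans L)) :
    Hist.costFrom π (ℓ, ν) (zeroSteps ν δs) = pathPrice δs := by
  induction δs generalizing ℓ with
  | nil => simp [zeroSteps, Hist.costFrom, pathPrice]
  | cons δ δs ih =>
    simp only [zeroSteps, List.map_cons, Hist.costFrom, pathPrice_cons] at ih ⊢
    rw [ih]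
    push_cast
    ring

theorem discSum_zeroSteps (s : L × ℝ) (ν : ℝ) (δs : List (PTrans L)) :
    Hist.discSum ⟨s, zeroSteps ν δs⟩ = pathPrice δs := by
  simp [Hist.discSum, zeroSteps, pathPrice, Function.comp_def]

theorem abs_pathPrice_le {Q : ℕ} :
    ∀ {δs : List (PTrans L)}, (∀ δ ∈ δs, δ.price.natAbs ≤ Q) → |pathPrice δs| ≤ δs.length * Q
  | [], _ => by simp [pathPrice]
  | δ :: δs, h => by
    have hδ : |δ.price| ≤ Q := by
      rw [Int.abs_eq_natAbs]
      exact_mod_cast h δ List.mem_cons_self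
    have hδs := abs_pathPrice_le fun δ' hδ' => h δ' (List.mem_cons_of_mem _ hδ')
    rw [pathPrice_cons, List.length_cons]
    push_cast
    linarith [abs_add_le δ.price (pathPrice δs)]

end Paths

section Plays

def PTG.IsPath (P : PTG) : P.Loc → List (PTrans P.Loc) → Prop
  | _, [] => True
  | ℓ, δ :: δs => δ ∈ P.trans ∧ δ.src = ℓ ∧ P.IsPath δ.tgt δs

def PTG.ConsistentFrom (P : PTG) (σ : StratFun P.Loc) :
    P.Config → List (ℝ × PTrans P.Loc × P.Config) → Prop
  | _, [] => True
  | s, (t, δ, s') :: rest =>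
    (P.owner s.1 = Owner.min → (t, δ) = σ ⟨s, []⟩) ∧ P.ConsistentFrom σ s' rest

def PTG.IsFinalPlay (P : PTG) (σ : StratFun P.Loc) (s : P.Config)
    (steps : List (ℝ × PTrans P.Loc × P.Config)) : Prop :=
  P.HistValid ⟨s, steps⟩ ∧ P.ConsistentFrom σ s steps ∧
    P.owner (Hist.lastFrom s steps).1 = Owner.final

def PTG.runCost (P : PTG) (s : P.Config) (steps : List (ℝ × PTrans P.Loc × P.Config)) : ℝ :=
  Hist.costFrom P.price s steps + P.fcost (Hist.lastFrom s steps).1 (Hist.lastFrom s steps).2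

def PTG.nNonfinal (P : PTG) : ℕ :=
  (Finset.univ.filter fun ℓ : P.Loc => P.owner ℓ ≠ Owner.final).card

variable {P : PTG}

theorem PTG.validFrom_append (s : P.Config) (A B : List (ℝ × PTrans P.Loc × P.Config)) :
    P.ValidFrom s (A ++ B) ↔ P.ValidFrom s A ∧ P.ValidFrom (Hist.lastFrom s A) B := by
  induction A generalizing s with
  | nil => simp [PTG.ValidFrom, Hist.lastFrom]
  | cons x A ih =>
    obtain ⟨t, δ, s'⟩ := x
    simp [PTG.ValidFrom, Hist.lastFrom, ih, and_assoc]

theorem PTG.consistentFrom_append (σ : StratFun P.Loc) (s : P.Config)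
    (A B : List (ℝ × PTrans P.Loc × P.Config)) :
    P.ConsistentFrom σ s (A ++ B) ↔
      P.ConsistentFrom σ s A ∧ P.ConsistentFrom σ (Hist.lastFrom s A) B := by
  induction A generalizing s with
  | nil => simp [PTG.ConsistentFrom, Hist.lastFrom]
  | cons x A ih =>
    obtain ⟨t, δ, s'⟩ := x
    simp [PTG.ConsistentFrom, Hist.lastFrom, ih, and_assoc]

theorem PTG.isPath_append (ℓ : P.Loc) (A B : List (PTrans P.Loc)) :
    P.IsPath ℓ (A ++ B) ↔ P.IsPath ℓ A ∧ P.IsPath (pathEnd ℓ A) B := by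
  induction A generalizing ℓ with
  | nil => simp [PTG.IsPath, pathEnd]
  | cons δ A ih => simp [PTG.IsPath, pathEnd, ih, and_assoc]

theorem PTG.IsPath.mem_trans {ℓ : P.Loc} {δs : List (PTrans P.Loc)} (h : P.IsPath ℓ δs)
    {δ : PTrans P.Loc} (hδ : δ ∈ δs) : δ ∈ P.trans := by
  induction δs generalizing ℓ with
  | nil => simp at hδ
  | cons δ' δs ih =>
    rcases List.mem_cons.1 hδ with rfl | hδ
    exacts [h.1, ih h.2.2 hδ]

theorem PTG.runCost_zeroSteps (ℓ : P.Loc) (ν : ℝ) (δs : List (PTrans P.Loc)) :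
    P.runCost (ℓ, ν) (zeroSteps ν δs) = pathPrice δs + P.fcost (pathEnd ℓ δs) ν := by
  simp only [PTG.runCost, costFrom_zeroSteps, lastFrom_zeroSteps]

theorem PTG.IsPath.length_le_nNonfinal
    (hsrc : ∀ δ ∈ P.trans, P.owner δ.src ≠ Owner.final) {ℓ : P.Loc}
    {δs : List (PTrans P.Loc)} (hpath : P.IsPath ℓ δs) (hnd : (δs.map PTrans.src).Nodup) :
    δs.length ≤ P.nNonfinal := by
  rw [← List.length_map PTrans.src, ← List.toFinset_card_of_nodup hnd]
  refine Finset.card_le_card fun x hx => ?_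
  obtain ⟨δ, hδ, rfl⟩ := List.mem_map.1 (List.mem_toFinset.1 hx)
  exact Finset.mem_filter.2 ⟨Finset.mem_univ _, hsrc δ (hpath.mem_trans hδ)⟩

theorem PTG.validFrom_take :
    ∀ (s : P.Config) (steps : List (ℝ × PTrans P.Loc × P.Config)) (i : ℕ),
      P.ValidFrom s steps → P.ValidFrom s (steps.take i)
  | _, [], _, h => by simpa using h
  | _, _ :: _, 0, _ => trivial
  | _, (_, _, s') :: rest, i + 1, ⟨hmv, hrest⟩ => ⟨hmv, PTG.validFrom_take s' rest i hrest⟩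

theorem PTG.HistValid.take {h : Hist P.Loc} (hv : P.HistValid h) (i : ℕ) :
    P.HistValid (h.take i) :=
  ⟨hv.1, hv.2.1, PTG.validFrom_take _ _ i hv.2.2⟩

end Plays

section SPTG

variable {P : PTG} {r : ℝ}

theorem PTG.IsSPTG.memGuard_iff (hP : P.IsSPTG r) {δ : PTrans P.Loc} (hδ : δ ∈ P.trans)
    (ν : ℝ) : δ.memGuard ν ↔ 0 ≤ ν ∧ ν ≤ r := by
  obtain ⟨hlo, hhi, hlo', hhi', -⟩ := hP.2.2 δ hδ
  simp [PTrans.memGuard, hlo, hhi, hlo', hhi']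

theorem PTG.IsSPTG.validFrom_zeroSteps_iff (hP : P.IsSPTG r) {ν : ℝ} (h0 : 0 ≤ ν)
    (hr : ν ≤ r) (ℓ : P.Loc) (δs : List (PTrans P.Loc)) :
    P.ValidFrom (ℓ, ν) (zeroSteps ν δs) ↔ P.IsPath ℓ δs := by
  induction δs generalizing ℓ with
  | nil => exact iff_of_true trivial trivial
  | cons δ δs ih =>
    change (_ ∧ P.ValidFrom _ (zeroSteps ν δs)) ↔ _ ∧ _ ∧ P.IsPath δ.tgt δs
    rw [← ih δ.tgt]
    constructor
    · rintro ⟨⟨_, hmv⟩, hrest⟩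
      exact ⟨hmv.1, hmv.2.1, hrest⟩
    · rintro ⟨hδ, hsrc, hrest⟩
      refine ⟨⟨_, hδ, hsrc, le_rfl, fun _ => rfl, ?_, rfl, ?_, rfl⟩, hrest⟩
      · rw [add_zero, hP.memGuard_iff hδ]
        exact ⟨h0, hr⟩
      · simp [(hP.2.2 δ hδ).2.2.2.2]

theorem PTG.IsSPTG.validFrom_zeroSteps_append_cons (hP : P.IsSPTG r) {ν : ℝ} (h0 : 0 ≤ ν)
    (hr : ν ≤ r) (ℓ : P.Loc) (δs : List (PTrans P.Loc)) (t : ℝ) (δ : PTrans P.Loc)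
    (s' : P.Config) (rest : List (ℝ × PTrans P.Loc × P.Config)) :
    P.ValidFrom (ℓ, ν) (zeroSteps ν δs ++ (t, δ, s') :: rest) ↔
      P.IsPath ℓ δs ∧ (∃ c, P.Move (pathEnd ℓ δs, ν) s' t δ c) ∧ P.ValidFrom s' rest := by
  rw [PTG.validFrom_append, hP.validFrom_zeroSteps_iff h0 hr, lastFrom_zeroSteps]
  rfl

theorem PTG.IsSPTG.eq_zeroSteps_or_delay (hP : P.IsSPTG r) :
    ∀ (s : P.Config) (steps : List (ℝ × PTrans P.Loc × P.Config)), P.ValidFrom s steps →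
      (∃ δs, steps = zeroSteps s.2 δs) ∨
      ∃ δs t δ s' rest, steps = zeroSteps s.2 δs ++ (t, δ, s') :: rest ∧ t ≠ 0
  | _, [], _ => Or.inl ⟨[], rfl⟩
  | s, (t, δ, s') :: rest, ⟨⟨_, hmv⟩, hrest⟩ => by
    by_cases ht : t = 0
    · subst ht
      obtain ⟨hδ, -, -, -, -, hs'1, hs'2, -⟩ := hmv
      have hs' : s' = (δ.tgt, s.2) := Prod.ext hs'1 (by simp [hs'2, (hP.2.2 δ hδ).2.2.2.2])
      subst hs'
      rcases hP.eq_zeroSteps_or_delay _ rest hrest with ⟨δs, rfl⟩ | ⟨δs, t, δ', s'', rest', rfl, ht⟩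
      · exact Or.inl ⟨δ :: δs, rfl⟩
      · exact Or.inr ⟨δ :: δs, t, δ', s'', rest', rfl, ht⟩
    · exact Or.inr ⟨[], t, δ, s', rest, rfl, ht⟩

theorem PTG.IsSPTG.histValid_tail (hP : P.IsSPTG r) (hrM : r ≤ P.M) {s : P.Config}
    {x : ℝ × PTrans P.Loc × P.Config} {rest : List (ℝ × PTrans P.Loc × P.Config)}
    (hv : P.HistValid ⟨s, x :: rest⟩) : P.HistValid ⟨x.2.2, rest⟩ := by
  obtain ⟨t, δ, s'⟩ := x
  obtain ⟨-, -, ⟨_, hδ, -, -, -, hguard, -, hs', -⟩, hrest⟩ := hv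
  rw [hP.memGuard_iff hδ] at hguard
  show 0 ≤ s'.2 ∧ s'.2 ≤ P.M ∧ _
  simp only [hs', (hP.2.2 δ hδ).2.2.2.2, Bool.false_eq_true, ↓reduceIte]
  exact ⟨hguard.1, hguard.2.trans hrM, hrest⟩

theorem PTG.IsSPTG.consistent_cons_iff (hP : P.IsSPTG r) (hrM : r ≤ P.M) {ρ : ℝ}
    (σ : FPStrat P ρ Owner.min) {s : P.Config} {x : ℝ × PTrans P.Loc × P.Config}
    {rest : List (ℝ × PTrans P.Loc × P.Config)} (hv : P.HistValid ⟨s, x :: rest⟩) :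
    P.Consistent Owner.min σ.strat ⟨s, x :: rest⟩ ↔
      (P.owner s.1 = Owner.min → (x.1, x.2.1) = σ.strat ⟨s, []⟩) ∧
        P.Consistent Owner.min σ.strat ⟨x.2.2, rest⟩ := by
  have hshift : ∀ i, σ.strat (Hist.take ⟨s, x :: rest⟩ (i + 1)) =
      σ.strat (Hist.take ⟨x.2.2, rest⟩ i) := fun i =>
    σ.memoryless _ _ (hv.take _) ((hP.histValid_tail hrM hv).take i) rfl
  constructor
  · intro hc
    exact ⟨hc 0 (Nat.succ_pos _), fun i hi how =>
      (hc (i + 1) (Nat.succ_lt_succ hi) how).trans (hshift i)⟩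
  · rintro ⟨hhead, htail⟩ (_ | i) hi how
    · exact hhead how
    · exact (htail i (Nat.lt_of_succ_lt_succ hi) how).trans (hshift i).symm

theorem PTG.IsSPTG.consistent_iff_consistentFrom (hP : P.IsSPTG r) (hrM : r ≤ P.M) {ρ : ℝ}
    (σ : FPStrat P ρ Owner.min) :
    ∀ (s : P.Config) (steps : List (ℝ × PTrans P.Loc × P.Config)),
      P.HistValid ⟨s, steps⟩ →
      (P.Consistent Owner.min σ.strat ⟨s, steps⟩ ↔ P.ConsistentFrom σ.strat s steps)
  | _, [], _ => iff_of_true (fun _ hi => absurd hi (Nat.not_lt_zero _)) trivial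
  | _, (t, δ, s') :: rest, hv => by
    rw [hP.consistent_cons_iff hrM σ hv,
      hP.consistent_iff_consistentFrom hrM σ s' rest (hP.histValid_tail hrM hv)]
    rfl

end SPTG

section NC

variable {P : PTG} {r : ℝ}

theorem PTG.IsSPTG.le_fakeVal (hP : P.IsSPTG r) (hrM : r ≤ P.M) {ρ : ℝ}
    (σ : FPStrat P ρ Owner.min) {s : P.Config} {steps : List (ℝ × PTrans P.Loc × P.Config)}
    (h : P.IsFinalPlay σ.strat s steps) : (P.runCost s steps : EReal) ≤ P.fakeVal σ.strat s :=
  le_sSup ⟨⟨s, steps⟩, rfl, h.1, (hP.consistent_iff_consistentFrom hrM σ _ _ h.1).2 h.2.1,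
    h.2.2, rfl⟩

theorem PTG.IsSPTG.fakeVal_le (hP : P.IsSPTG r) (hrM : r ≤ P.M) {ρ : ℝ}
    (σ : FPStrat P ρ Owner.min) {s : P.Config} {x : EReal}
    (h : ∀ steps, P.IsFinalPlay σ.strat s steps → (P.runCost s steps : EReal) ≤ x) :
    P.fakeVal σ.strat s ≤ x := by
  refine sSup_le ?_
  rintro _ ⟨⟨s', steps⟩, rfl, hv, hc, hf, rfl⟩
  exact h steps ⟨hv, (hP.consistent_iff_consistentFrom hrM σ _ _ hv).1 hc, hf⟩

theorem FPStrat.IsNC.pathPrice_le_of_cycle (hP : P.IsSPTG r) (hrM : r ≤ P.M)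
    {σ : FPStrat P r Owner.min} (hNC : σ.IsNC) {ν : ℝ} (h0 : 0 ≤ ν) (hr : ν ≤ r)
    {ℓ : P.Loc} {δs : List (PTrans P.Loc)} (hpath : P.IsPath ℓ δs)
    (hc : P.ConsistentFrom σ.strat (ℓ, ν) (zeroSteps ν δs)) (hne : δs ≠ [])
    (hend : pathEnd ℓ δs = ℓ) : pathPrice δs ≤ -1 := by
  have hv : P.HistValid ⟨(ℓ, ν), zeroSteps ν δs⟩ :=
    ⟨h0, hr.trans hrM, (hP.validFrom_zeroSteps_iff h0 hr ℓ δs).2 hpath⟩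
  have hlast : Hist.last ⟨(ℓ, ν), zeroSteps ν δs⟩ = (ℓ, ν) := by
    rw [Hist.last, lastFrom_zeroSteps, hend]
  rw [← discSum_zeroSteps (ℓ, ν) ν δs]
  refine hNC _ hv ((hP.consistent_iff_consistentFrom hrM σ _ _ hv).2 hc)
    (by simpa [zeroSteps] using hne) (by rw [hlast]) fun p _ => by rw [hlast]

/-- Cycles consistent with an NC strategy have price at most `-1`, so cutting them out of a
path does not decrease its price. -/
theorem FPStrat.IsNC.exists_simple_path (hP : P.IsSPTG r) (hrM : r ≤ P.M)
    {σ : FPStrat P r Owner.min} (hNC : σ.IsNC) {ν : ℝ} (h0 : 0 ≤ ν) (hr : ν ≤ r) :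
    ∀ (ℓ : P.Loc) (δs : List (PTrans P.Loc)), P.IsPath ℓ δs →
      P.ConsistentFrom σ.strat (ℓ, ν) (zeroSteps ν δs) →
      ∃ δs', P.IsPath ℓ δs' ∧ P.ConsistentFrom σ.strat (ℓ, ν) (zeroSteps ν δs') ∧
        pathEnd ℓ δs' = pathEnd ℓ δs ∧ pathPrice δs ≤ pathPrice δs' ∧
        (δs'.map PTrans.src).Nodup ∧ δs'.map PTrans.src ⊆ δs.map PTrans.src
  | ℓ, [], _, _ => ⟨[], trivial, trivial, rfl, le_rfl, List.nodup_nil, fun _ h => h⟩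
  | ℓ, δ :: δs, hpath, hc => by
    by_cases hmem : ℓ ∈ δs.map PTrans.src
    · obtain ⟨δ₂, hδ₂, hsrc₂⟩ := List.mem_map.1 hmem
      obtain ⟨A, C, hAC⟩ := List.append_of_mem hδ₂
      have hlen : (δ₂ :: C).length < (δ :: δs).length := by simp [hAC]
      rw [hAC] at hpath hc ⊢
      have hpath' := (P.isPath_append ℓ (δ :: A) (δ₂ :: C)).1 hpath
      have hc' := (P.consistentFrom_append σ.strat _ _ _).1
        ((zeroSteps_append ν (δ :: A) (δ₂ :: C)) ▸ hc)
      rw [lastFrom_zeroSteps] at hc'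
      have hend : pathEnd ℓ (δ :: A) = ℓ := hpath'.2.2.1 ▸ hsrc₂
      rw [hend] at hpath' hc'
      have hcycle := hNC.pathPrice_le_of_cycle hP hrM h0 hr hpath'.1 hc'.1 (List.cons_ne_nil _ _)
        hend
      obtain ⟨δs', h₁, h₂, h₃, h₄, h₅, h₆⟩ := hNC.exists_simple_path hP hrM h0 hr ℓ _ hpath'.2 hc'.2
      refine ⟨δs', h₁, h₂, ?_, ?_, h₅, fun x hx => ?_⟩
      · rw [h₃, ← List.cons_append, pathEnd_append, hend]
      · rw [← List.cons_append, pathPrice_append]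
        linarith
      · have := h₆ hx
        simp only [List.map_cons, List.map_append, List.mem_cons, List.mem_append] at this ⊢
        tauto
    · obtain ⟨δs', h₁, h₂, h₃, h₄, h₅, h₆⟩ :=
        hNC.exists_simple_path hP hrM h0 hr δ.tgt δs hpath.2.2 hc.2
      refine ⟨δ :: δs', ⟨hpath.1, hpath.2.1, h₁⟩, ⟨hc.1, h₂⟩, h₃, ?_, ?_,
        List.cons_subset_cons _ h₆⟩
      · rw [pathPrice_cons, pathPrice_cons]
        linarith
      · rw [List.map_cons, hpath.2.1]
        exact List.nodup_cons.2 ⟨fun h => hmem (h₆ h), h₅⟩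
termination_by _ δs => δs.length
decreasing_by all_goals first | exact hlen | simp

end NC

section Interval

variable {P : PTG} {r : ℝ} (σ : FPStrat P r Owner.min) {u v : ℝ}

theorem FPStrat.immediate_or_wait_on_Icc (hu : 0 < u) (huv : u ≤ v) (hvr : v ≤ r)
    (hpts : ∀ p ∈ σ.points, p ∉ Set.Icc u v) {ℓ : P.Loc} (hℓ : P.owner ℓ = Owner.min) :
    (∃ δ, ∀ x ∈ Set.Icc u v, σ.strat ⟨(ℓ, x), []⟩ = (0, δ)) ∨
      ∃ p δ, v < p ∧ ∀ x ∈ Set.Icc u v, σ.strat ⟨(ℓ, x), []⟩ = (p - x, δ) := by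
  obtain ⟨k, pt, δ, -, -, hlast, hmem, hpw, -⟩ := σ.piecewise ℓ hℓ
  have hne : (Finset.univ.filter fun i => v ≤ pt i).Nonempty :=
    ⟨Fin.last k, Finset.mem_filter.2 ⟨Finset.mem_univ _, hlast ▸ hvr⟩⟩
  set i := (Finset.univ.filter fun i => v ≤ pt i).min' hne
  have hvi : v ≤ pt i := (Finset.mem_filter.1 (Finset.min'_mem _ hne)).2
  have hvi' : v < pt i :=
    lt_of_le_of_ne hvi fun h => hpts _ (hmem i) ⟨huv.trans hvi, h.ge⟩
  have hprev : prevPt pt i < u := by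
    unfold prevPt
    split_ifs with hi
    · exact (min_le_left _ _).trans_lt hu
    · set j : Fin (k + 1) := ⟨(i : ℕ) - 1, by omega⟩
      have hjv : pt j < v := by
        by_contra! h
        have : i ≤ j := Finset.min'_le _ j (Finset.mem_filter.2 ⟨Finset.mem_univ _, h⟩)
        have : (i : ℕ) ≤ (i : ℕ) - 1 := this
        omega
      by_contra! h
      exact hpts _ (hmem j) ⟨h, hjv.le⟩
  rcases hpw i with h | h
  · exact Or.inl ⟨δ i, fun x hx => h x (hprev.trans_le hx.1) (hx.2.trans hvi)⟩
  · exact Or.inr ⟨pt i, δ i, hvi', fun x hx => h x (hprev.trans_le hx.1) (hx.2.trans hvi)⟩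

theorem FPStrat.consistentFrom_zeroSteps_of_Icc (hu : 0 < u) (huv : u ≤ v) (hvr : v ≤ r)
    (hpts : ∀ p ∈ σ.points, p ∉ Set.Icc u v) {ν μ : ℝ} (hν : ν ∈ Set.Icc u v)
    (hμ : μ ∈ Set.Icc u v) :
    ∀ (ℓ : P.Loc) (δs : List (PTrans P.Loc)),
      P.ConsistentFrom σ.strat (ℓ, ν) (zeroSteps ν δs) →
      P.ConsistentFrom σ.strat (ℓ, μ) (zeroSteps μ δs)
  | _, [], _ => trivial
  | ℓ, δ :: δs, ⟨hδ, hδs⟩ => by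
    refine ⟨fun hℓ => ?_,
      FPStrat.consistentFrom_zeroSteps_of_Icc hu huv hvr hpts hν hμ δ.tgt δs hδs⟩
    have hδ := hδ hℓ
    rcases σ.immediate_or_wait_on_Icc hu huv hvr hpts hℓ with ⟨δ', hσ⟩ | ⟨p, δ', hp, hσ⟩
    · rw [hσ ν hν] at hδ
      rw [hσ μ hμ, ← hδ]
    · rw [hσ ν hν, Prod.mk.injEq] at hδ
      linarith [hν.2]

theorem FPStrat.isFinalPlay_shift (hP : P.IsSPTG r) (hrM : r ≤ P.M) (hu : 0 < u)
    (hvr : v ≤ r) (hpts : ∀ p ∈ σ.points, p ∉ Set.Icc u v) {ν : ℝ} (hν : ν ∈ Set.Icc u v)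
    {ℓ : P.Loc} {δs : List (PTrans P.Loc)} {t : ℝ} {δ : PTrans P.Loc} {s' : P.Config}
    {rest : List (ℝ × PTrans P.Loc × P.Config)}
    (h : P.IsFinalPlay σ.strat (ℓ, ν) (zeroSteps ν δs ++ (t, δ, s') :: rest)) (ht : t ≠ 0) :
    P.IsFinalPlay σ.strat (ℓ, u) (zeroSteps u δs ++ (t + (ν - u), δ, s') :: rest) ∧
      P.runCost (ℓ, u) (zeroSteps u δs ++ (t + (ν - u), δ, s') :: rest) =
        P.runCost (ℓ, ν) (zeroSteps ν δs ++ (t, δ, s') :: rest) +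
          (ν - u) * P.price (pathEnd ℓ δs) := by
  have huv : u ≤ v := hν.1.trans hν.2
  have hur : u ≤ r := huv.trans hvr
  have hu' : u ∈ Set.Icc u v := ⟨le_rfl, huv⟩
  obtain ⟨⟨-, -, hvalid⟩, hcons, hfinal⟩ := h
  rw [hP.validFrom_zeroSteps_append_cons (hu.le.trans hν.1) (hν.2.trans hvr)] at hvalid
  obtain ⟨hpath, ⟨_, hδ, hsrc, ht0, hurg, hguard, hs'1, hs'2, -⟩, hrest⟩ := hvalid
  rw [PTG.consistentFrom_append, lastFrom_zeroSteps] at hcons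
  obtain ⟨hcons₀, hstep, hcons'⟩ := hcons
  have hlast : ∀ μ τ, Hist.lastFrom (ℓ, μ) (zeroSteps μ δs ++ (τ, δ, s') :: rest) =
      Hist.lastFrom s' rest := fun μ τ => by
    rw [Hist.lastFrom_append, lastFrom_zeroSteps]
    rfl
  have hshift : u + (t + (ν - u)) = ν + t := by ring
  refine ⟨⟨⟨hu.le, hur.trans hrM, ?_⟩, ?_, by rwa [hlast] at hfinal ⊢⟩, ?_⟩
  · rw [hP.validFrom_zeroSteps_append_cons hu.le hur]
    refine ⟨hpath, ⟨_, hδ, hsrc, ?_, fun h => absurd (hurg h) ht, ?_, hs'1, ?_, rfl⟩, hrest⟩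
    · linarith [hν.1]
    · simpa only [hshift] using hguard
    · simpa only [hshift] using hs'2
  · rw [PTG.consistentFrom_append, lastFrom_zeroSteps]
    refine ⟨σ.consistentFrom_zeroSteps_of_Icc hu huv hvr hpts hν hu' ℓ δs hcons₀,
      fun hℓ => ?_, hcons'⟩
    have hσν := hstep hℓ
    rcases σ.immediate_or_wait_on_Icc hu huv hvr hpts hℓ with ⟨δ', hσ⟩ | ⟨p, δ', -, hσ⟩
    · rw [hσ ν hν, Prod.mk.injEq] at hσν
      exact absurd hσν.1 ht
    · rw [hσ ν hν, Prod.mk.injEq] at hσν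
      rw [hσ u hu', hσν.1, hσν.2]
      congr 1
      ring
  · simp only [PTG.runCost, Hist.costFrom_append, costFrom_zeroSteps, lastFrom_zeroSteps, hlast,
      Hist.costFrom]
    ring

end Interval

section Value

variable {P : PTG} {r : ℝ} {σ : FPStrat P r Owner.min} {u v : ℝ}

theorem FPStrat.IsNC.runCost_le_of_isFinalPlay (hNC : σ.IsNC) (hP : P.IsSPTG r)
    (hrM : r ≤ P.M) {π : ℝ} (hπ : ∀ δ ∈ P.trans, π ≤ P.price δ.src) (hu : 0 < u) (hvr : v ≤ r)
    (hpts : ∀ p ∈ σ.points, p ∉ Set.Icc u v) {ν : ℝ} (hν : ν ∈ Set.Icc u v) {ℓ : P.Loc}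
    {a : ℝ} (ha : P.fakeVal σ.strat (ℓ, u) = a) {steps : List (ℝ × PTrans P.Loc × P.Config)}
    (h : P.IsFinalPlay σ.strat (ℓ, ν) steps) :
    P.runCost (ℓ, ν) steps ≤ a - (ν - u) * π ∨
      ∃ δs, P.IsFinalPlay σ.strat (ℓ, ν) (zeroSteps ν δs) ∧ (δs.map PTrans.src).Nodup ∧
        P.runCost (ℓ, ν) steps ≤ P.runCost (ℓ, ν) (zeroSteps ν δs) := by
  have hν0 : 0 ≤ ν := hu.le.trans hν.1
  have hνr : ν ≤ r := hν.2.trans hvr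
  rcases hP.eq_zeroSteps_or_delay (ℓ, ν) steps h.1.2.2 with
    ⟨δs, rfl⟩ | ⟨δs, t, δ, s', rest, rfl, ht⟩
  · right
    have hpath := (hP.validFrom_zeroSteps_iff hν0 hνr ℓ δs).1 h.1.2.2
    obtain ⟨δs', h₁, h₂, h₃, h₄, h₅, -⟩ := hNC.exists_simple_path hP hrM hν0 hνr ℓ δs hpath h.2.1
    refine ⟨δs', ⟨⟨hν0, hνr.trans hrM, (hP.validFrom_zeroSteps_iff hν0 hνr ℓ δs').2 h₁⟩, h₂,
      ?_⟩, h₅, ?_⟩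
    · rw [lastFrom_zeroSteps, h₃, ← lastFrom_zeroSteps ℓ ν δs]
      exact h.2.2
    · rw [P.runCost_zeroSteps, P.runCost_zeroSteps, h₃]
      have : (pathPrice δs : ℝ) ≤ pathPrice δs' := by exact_mod_cast h₄
      linarith
  · left
    obtain ⟨hshift, hcost⟩ := σ.isFinalPlay_shift hP hrM hu hvr hpts hν h ht
    have hle := hP.le_fakeVal hrM σ hshift
    rw [ha, hcost, EReal.coe_le_coe_iff] at hle
    obtain ⟨-, ⟨_, hδ, hsrc, -⟩, -⟩ :=
      (hP.validFrom_zeroSteps_append_cons hν0 hνr ℓ δs t δ s' rest).1 h.1.2.2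
    have hπδ : (ν - u) * π ≤ (ν - u) * P.price (pathEnd ℓ δs) :=
      mul_le_mul_of_nonneg_left (hsrc ▸ hπ δ hδ :) (sub_nonneg.2 hν.1)
    linarith

/-- The supremum defining the fake value is attained among the finitely many costs of simple
delay-free paths, since `hac` puts every play that waits below it. -/
theorem FPStrat.IsNC.exists_eq_fakeVal (hNC : σ.IsNC) (hP : P.IsSPTG r) (hrM : r ≤ P.M)
    (hsrc : ∀ δ ∈ P.trans, P.owner δ.src ≠ Owner.final) {Q : ℕ}
    (hQ : ∀ δ ∈ P.trans, δ.price.natAbs ≤ Q) {π : ℝ} (hπ : ∀ δ ∈ P.trans, π ≤ P.price δ.src)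
    (hu : 0 < u) (hvr : v ≤ r) (hpts : ∀ p ∈ σ.points, p ∉ Set.Icc u v) {ν : ℝ}
    (hν : ν ∈ Set.Icc u v) {ℓ : P.Loc} {a c : ℝ} (ha : P.fakeVal σ.strat (ℓ, u) = a)
    (hc : P.fakeVal σ.strat (ℓ, ν) = c) (hac : a - (ν - u) * π < c) :
    ∃ (D : ℤ) (f : P.Loc), |D| ≤ P.nNonfinal * Q ∧ P.owner f = Owner.final ∧
      D + P.fcost f ν = c := by
  have hν0 : 0 ≤ ν := hu.le.trans hν.1
  have hνr : ν ≤ r := hν.2.trans hvr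
  have hbound : ∀ δs, P.IsFinalPlay σ.strat (ℓ, ν) (zeroSteps ν δs) →
      (δs.map PTrans.src).Nodup → |pathPrice δs| ≤ P.nNonfinal * Q := fun δs h hnd => by
    have hpath := (hP.validFrom_zeroSteps_iff hν0 hνr ℓ δs).1 h.1.2.2
    refine (abs_pathPrice_le fun δ hδ => hQ δ (hpath.mem_trans hδ)).trans ?_
    exact mul_le_mul_of_nonneg_right (by exact_mod_cast hpath.length_le_nNonfinal hsrc hnd)
      (by positivity)
  set V : Set ℝ := {y | ∃ δs, P.IsFinalPlay σ.strat (ℓ, ν) (zeroSteps ν δs) ∧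
    (δs.map PTrans.src).Nodup ∧ y = P.runCost (ℓ, ν) (zeroSteps ν δs)}
  have hVfin : V.Finite := by
    refine (((Set.finite_Icc (-(P.nNonfinal * Q : ℤ)) (P.nNonfinal * Q)).prod
      (Set.finite_univ (α := P.Loc))).image fun p => (p.1 : ℝ) + P.fcost p.2 ν).subset ?_
    rintro _ ⟨δs, h, hnd, rfl⟩
    exact ⟨(pathPrice δs, pathEnd ℓ δs), ⟨abs_le.1 (hbound δs h hnd), trivial⟩,
      (P.runCost_zeroSteps ℓ ν δs).symm⟩
  set V' : Set EReal := insert ((a - (ν - u) * π : ℝ) : EReal) ((↑) '' V)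
  have hcV' : (c : EReal) ≤ sSup V' := hc ▸ hP.fakeVal_le hrM σ fun steps h => by
    rcases hNC.runCost_le_of_isFinalPlay hP hrM hπ hu hvr hpts hν ha h with h | ⟨δs, hδs, hnd, h⟩
    · exact le_sSup_of_le (Set.mem_insert _ _) (EReal.coe_le_coe_iff.2 h)
    · exact le_sSup_of_le (Set.mem_insert_of_mem _ ⟨_, ⟨δs, hδs, hnd, rfl⟩, rfl⟩)
        (EReal.coe_le_coe_iff.2 h)
  rcases (Set.insert_nonempty _ _ : V'.Nonempty).csSup_mem ((hVfin.image _).insert _) with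
    hW | ⟨_, ⟨δs, hδs, hnd, rfl⟩, hy⟩
  · rw [hW, EReal.coe_le_coe_iff] at hcV'
    linarith
  · have hcδs : c = P.runCost (ℓ, ν) (zeroSteps ν δs) := le_antisymm
      (EReal.coe_le_coe_iff.1 (hy ▸ hcV')) (EReal.coe_le_coe_iff.1 (hc ▸ hP.le_fakeVal hrM σ hδs))
    refine ⟨pathPrice δs, pathEnd ℓ δs, hbound δs hδs hnd, ?_, ?_⟩
    · simpa only [lastFrom_zeroSteps] using hδs.2.2
    · rw [hcδs, P.runCost_zeroSteps]

end Value

theorem Set.OrdConnected.exists_Icc_subset_disjoint {I : Set ℝ} (hI : I.OrdConnected)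
    (hI0 : ∀ x ∈ I, 0 ≤ x) (hnt : I.Nontrivial) (s : Finset ℝ) :
    ∃ u v, 0 < u ∧ u < v ∧ Set.Icc u v ⊆ I ∧ ∀ p ∈ s, p ∉ Set.Icc u v := by
  obtain ⟨a, ha, b, hb, hab⟩ := hnt.exists_lt
  have hne : (insert a (s.filter (· < b))).Nonempty := Finset.insert_nonempty _ _
  set m := (insert a (s.filter (· < b))).max' hne
  have hm : m < b := by
    rcases Finset.mem_insert.1 (Finset.max'_mem _ hne) with h | h
    · rw [show m = a from h]
      exact hab
    · exact (Finset.mem_filter.1 h).2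
  have ham : a ≤ m := Finset.le_max' _ a (Finset.mem_insert_self _ _)
  have hu : a < m + (b - m) / 3 := by linarith
  have hv : m + 2 * (b - m) / 3 < b := by linarith
  refine ⟨m + (b - m) / 3, m + 2 * (b - m) / 3, (hI0 a ha).trans_lt hu, by linarith,
    (Set.Icc_subset_Icc hu.le hv.le).trans (hI.out ha hb), fun p hp hpI => ?_⟩
  have : p ≤ m := Finset.le_max' _ p
    (Finset.mem_insert_of_mem (Finset.mem_filter.2 ⟨hp, by linarith [hpI.2]⟩))
  linarith [hpI.1]

theorem Set.Infinite.exists_ne_of_forall_exists_mem_finite {α β : Type*} {S : Set α}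
    (hS : S.Infinite) {K : Set β} (hK : K.Finite) {R : α → β → Prop}
    (h : ∀ x ∈ S, ∃ p ∈ K, R x p) : ∃ x ∈ S, ∃ y ∈ S, x ≠ y ∧ ∃ p ∈ K, R x p ∧ R y p := by
  obtain ⟨x₀, hx₀⟩ := hS.nonempty
  have : Nonempty β := ⟨(h x₀ hx₀).choose⟩
  choose! f hfK hfR using h
  obtain ⟨x, hx, y, hy, hxy, hf⟩ := hS.exists_ne_map_eq_of_mapsTo hfK hK
  exact ⟨x, hx, y, hy, hxy, f x, hfK x hx, hfR x hx, hf ▸ hfR y hy⟩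

theorem eq_and_eq_of_affine_eq_of_ne {x y a b a' b' : ℝ} (hxy : x ≠ y)
    (hx : a * x + b = a' * x + b') (hy : a * y + b = a' * y + b') : a = a' ∧ b = b' := by
  have h : (a - a') * (x - y) = 0 := by linear_combination hx - hy
  have ha : a = a' := sub_eq_zero.1 ((mul_eq_zero.1 h).resolve_right (sub_ne_zero.2 hxy))
  exact ⟨ha, by subst ha; linarith⟩

section Wait

variable {G : PTG} {r : ℝ}

theorem PTG.wait_isSPTG (hG : G.IsSPTG 1) (h0 : 0 ≤ r) (h1 : r ≤ 1) (x : G.Loc → ℝ) :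
    (G.wait r x).IsSPTG r := by
  refine ⟨h0, h1, fun δ hδ => ?_⟩
  rcases Finset.mem_union.1 hδ with hδ | hδ
  · obtain ⟨δ₀, hδ₀, rfl⟩ := Finset.mem_image.1 hδ
    obtain ⟨hlo, hhi, hlo', hhi', hreset⟩ := hG.2.2 δ₀ hδ₀
    exact ⟨by simp [hlo], by simp [hhi, h1], hlo', hhi', hreset⟩
  · obtain ⟨ℓ, -, rfl⟩ := Finset.mem_image.1 hδ
    exact ⟨rfl, rfl, rfl, rfl, rfl⟩

theorem PTG.wait_owner_src_ne_final (hG : ∀ δ ∈ G.trans, G.owner δ.src ≠ Owner.final)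
    (x : G.Loc → ℝ) : ∀ δ ∈ (G.wait r x).trans, (G.wait r x).owner δ.src ≠ Owner.final := by
  intro δ hδ
  rcases Finset.mem_union.1 hδ with hδ | hδ
  · obtain ⟨δ₀, hδ₀, rfl⟩ := Finset.mem_image.1 hδ
    exact hG δ₀ hδ₀
  · obtain ⟨ℓ, hℓ, rfl⟩ := Finset.mem_image.1 hδ
    exact (Finset.mem_filter.1 hℓ).2.1

theorem PTG.wait_price_src_ge {m : ℤ} (hm : ∀ ℓ, m ≤ G.price ℓ) (x : G.Loc → ℝ) :
    ∀ δ ∈ (G.wait r x).trans, (m : ℝ) ≤ (G.wait r x).price δ.src := by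
  intro δ hδ
  rcases Finset.mem_union.1 hδ with hδ | hδ
  · obtain ⟨δ₀, -, rfl⟩ := Finset.mem_image.1 hδ
    exact_mod_cast hm δ₀.src
  · obtain ⟨ℓ, -, rfl⟩ := Finset.mem_image.1 hδ
    exact_mod_cast hm ℓ

theorem PTG.wait_natAbs_price_le (x : G.Loc → ℝ) :
    ∀ δ ∈ (G.wait r x).trans, δ.price.natAbs ≤ G.PT := by
  intro δ hδ
  rcases Finset.mem_union.1 hδ with hδ | hδ
  · obtain ⟨δ₀, hδ₀, rfl⟩ := Finset.mem_image.1 hδ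
    exact Finset.le_sup (f := fun δ => δ.price.natAbs) hδ₀
  · obtain ⟨ℓ, -, rfl⟩ := Finset.mem_image.1 hδ
    exact Nat.zero_le _

theorem PTG.nNonfinal_wait_le (x : G.Loc → ℝ) : (G.wait r x).nNonfinal ≤ G.nNonfinal := by
  refine (Finset.card_le_card fun y hy => ?_).trans
    (Finset.card_image_le (s := Finset.univ.filter fun ℓ => G.owner ℓ ≠ Owner.final)
      (f := Sum.inl))
  rcases y with ℓ | ℓ
  · exact Finset.mem_image_of_mem _ (Finset.mem_filter.2 ⟨Finset.mem_univ _,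
      (Finset.mem_filter.1 hy).2⟩)
  · exact absurd rfl (Finset.mem_filter.1 hy).2

end Wait

theorem PTG.nNonfinal_lt_nLoc {G : PTG} {f : G.Loc} (hf : G.owner f = Owner.final) :
    G.nNonfinal < G.nLoc :=
  Finset.card_lt_card (Finset.filter_ssubset.2 ⟨f, Finset.mem_univ _, fun h => h hf⟩)

theorem PTG.add_fcost_mem_FF {G : PTG} {f : G.Loc} (hf : G.owner f = Owner.final) {D : ℤ}
    (hD : |D| ≤ G.nNonfinal * G.PT) : (fun ν => (D : ℝ) + G.fcost f ν) ∈ G.FF := by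
  have hn : (G.nNonfinal : ℤ) ≤ G.nLoc - 1 := by
    have := G.nNonfinal_lt_nLoc hf
    omega
  have hB : (G.nNonfinal * G.PT : ℤ) ≤ (G.nLoc - 1) * G.PT :=
    mul_le_mul_of_nonneg_right hn (by positivity)
  refine ⟨f, D, hf, by linarith [(abs_le.1 hD).1], ?_, rfl⟩
  nlinarith [(abs_le.1 hD).2, (by positivity : (0 : ℤ) ≤ G.PT)]

theorem PTG.WF.one_le_M {G : PTG} (hwf : G.WF) (hG : G.IsSPTG 1) {ℓ : G.Loc}
    (hℓ : G.owner ℓ ≠ Owner.final) : (1 : ℝ) ≤ G.M := by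
  obtain ⟨-, -, δ, -, hδ, -⟩ := hwf.2.2.2.2 ℓ 0 hℓ le_rfl (Nat.cast_nonneg _)
  exact (hG.2.2 δ hδ).2.1 ▸ (hwf.2.1 δ hδ).2

/-- The final cost of a clone `ℓ'ᶠ` has slope `-π(ℓ') ≤ -π(ℓ)`, which `hα` excludes. -/
theorem PTG.exists_mem_FF_of_eq_wait_fcost {G : PTG} {r : ℝ} (hwf : G.WF) {ℓ : G.Loc}
    (hmin : ∀ ℓ' : G.Loc, G.price ℓ ≤ G.price ℓ') {α β : ℝ} (hα : -(G.price ℓ : ℝ) < α)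
    {x : G.Loc → ℝ} {D : ℤ} (hD : |D| ≤ G.nNonfinal * G.PT) {f : (G.wait r x).Loc}
    (hf : (G.wait r x).owner f = Owner.final) {ν₁ ν₂ : ℝ} (hne : ν₁ ≠ ν₂)
    (h₁ : D + (G.wait r x).fcost f ν₁ = α * ν₁ + β)
    (h₂ : D + (G.wait r x).fcost f ν₂ = α * ν₂ + β) :
    ∃ g ∈ G.FF, ∀ ν, g ν = α * ν + β := by
  rcases f with f | ℓ'
  · obtain ⟨a, b, hab⟩ := hwf.2.2.2.1 f hf
    have hfcost : ∀ ν, (D : ℝ) + (G.wait r x).fcost (Sum.inl f) ν = a * ν + (D + b) :=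
      fun ν => by
        change (D : ℝ) + G.fcost f ν = _
        rw [hab]
        ring
    obtain ⟨rfl, rfl⟩ := eq_and_eq_of_affine_eq_of_ne hne ((hfcost ν₁).symm.trans h₁)
      ((hfcost ν₂).symm.trans h₂)
    exact ⟨_, G.add_fcost_mem_FF hf hD, fun ν => by simp only [hab]; ring⟩
  · have hfcost : ∀ ν, (D : ℝ) + (G.wait r x).fcost (Sum.inr ℓ') ν =
        -(G.price ℓ' : ℝ) * ν + (D + r * G.price ℓ' + x ℓ') := fun ν => by
      change (D : ℝ) + ((r - ν) * G.price ℓ' + x ℓ') = _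
      ring
    have hslope := (eq_and_eq_of_affine_eq_of_ne hne ((hfcost ν₁).symm.trans h₁)
      ((hfcost ν₂).symm.trans h₂)).1
    have : (G.price ℓ : ℝ) ≤ G.price ℓ' := by exact_mod_cast hmin ℓ'
    linarith

theorem affine_piece_from_FF_general (G : PTG) (hwf : G.WF) (hsptg : G.IsSPTG 1)
    (ℓmin : G.Loc) (hℓf : G.owner ℓmin ≠ Owner.final)
    (hmin : ∀ ℓ : G.Loc, G.price ℓmin ≤ G.price ℓ)
    (r : ℝ) (hr0 : 0 < r) (hr1 : r ≤ 1)
    (hfo : (G.GLr (singLoc G ℓmin) r).FinitelyOptimal r)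
    (I : Set ℝ) (hI : I ⊆ Set.Icc 0 r) (hns : ∃ u ∈ I, ∃ v ∈ I, u ≠ v)
    (hIint : ∀ u ∈ I, ∀ v ∈ I, Set.Icc u v ⊆ I)
    (α β : ℝ) (hα : -(G.price ℓmin : ℝ) < α)
    (haff : ∀ ν ∈ I, (G.GLr (singLoc G ℓmin) r).val (Sum.inl ℓmin, ν) =
      ((α * ν + β : ℝ) : EReal)) :
    ∃ f ∈ G.FF, ∀ ν ∈ I,
      (G.GLr (singLoc G ℓmin) r).val (Sum.inl ℓmin, ν) = ((f ν : ℝ) : EReal) := by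
  set P := G.GLr (singLoc G ℓmin) r
  set x : G.Loc → ℝ := fun ℓ => (G.val (ℓ, r)).toReal
  obtain ⟨⟨σ, hNC, hopt⟩, -, -⟩ := hfo
  have hP : P.IsSPTG r := G.wait_isSPTG hsptg hr0.le hr1 x
  have hrM : r ≤ P.M := hr1.trans (hwf.one_le_M hsptg hℓf)
  have hfake : ∀ ν ∈ I, P.fakeVal σ.strat (Sum.inl ℓmin, ν) = ((α * ν + β : ℝ) : EReal) :=
    fun ν hν => (hopt _ ν (hI hν).1 (hI hν).2).trans (haff ν hν)
  obtain ⟨u, v, hu, huv, hIcc, hpts⟩ :=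
    Set.OrdConnected.exists_Icc_subset_disjoint ⟨hIint⟩ (fun x hx => (hI hx).1) hns σ.points
  have hvr : v ≤ r := (hI (hIcc ⟨huv.le, le_rfl⟩)).2
  have hpair : ∀ ν ∈ Set.Ioc u v,
      ∃ p ∈ Set.Icc (-(P.nNonfinal * G.PT : ℤ)) (P.nNonfinal * G.PT) ×ˢ (Set.univ : Set P.Loc),
        P.owner p.2 = Owner.final ∧ p.1 + P.fcost p.2 ν = α * ν + β := by
    intro ν hν
    obtain ⟨D, f, hD, hf, hDf⟩ := hNC.exists_eq_fakeVal hP hrM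
      (G.wait_owner_src_ne_final hwf.1 x) (G.wait_natAbs_price_le x) (G.wait_price_src_ge hmin x)
      hu hvr hpts (Set.Ioc_subset_Icc_self hν) (hfake u (hIcc ⟨le_rfl, huv.le⟩))
      (hfake ν (hIcc (Set.Ioc_subset_Icc_self hν))) (by nlinarith [hν.1])
    exact ⟨(D, f), ⟨abs_le.1 hD, trivial⟩, hf, hDf⟩
  obtain ⟨ν₁, -, ν₂, -, hne, ⟨D, f⟩, ⟨hD, -⟩, ⟨hf, h₁⟩, ⟨-, h₂⟩⟩ :=
    Set.Infinite.exists_ne_of_forall_exists_mem_finite (Set.Ioc_infinite huv)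
      ((Set.finite_Icc _ _).prod Set.finite_univ) hpair
  have hD' : |D| ≤ G.nNonfinal * G.PT := (abs_le.2 hD).trans
    (mul_le_mul_of_nonneg_right (by exact_mod_cast G.nNonfinal_wait_le (r := r) x) (by positivity))
  obtain ⟨g, hg, hgα⟩ := G.exists_mem_FF_of_eq_wait_fcost hwf hmin hα hD' hf hne h₁ h₂
  exact ⟨g, hg, fun ν hν => by rw [haff ν hν, hgα]⟩

/-- Lemma 10: let `ℓ_min` be a non-urgent location of minimal price of
an SPTG `G`, and `r ∈ (0,1]` with `G_{ℓ_min,r}` finitely optimal. If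
`Val_{G_{ℓ_min,r}}(ℓ_min)` is affine on a non-singleton interval `I ⊆ [0,r]` with slope
strictly greater than `−π(ℓ_min)`, then it coincides on `I` with some function of `F_G`. -/
theorem affine_piece_from_FF (G : PTG) (hwf : G.WF) (hsptg : G.IsSPTG 1)
    (hfin : ∀ (ℓ : G.Loc) (ν : ℝ), 0 ≤ ν → ν ≤ 1 → ∃ x : ℝ, G.val (ℓ, ν) = (x : EReal))
    (ℓmin : G.Loc) (hℓu : G.urgent ℓmin = false) (hℓf : G.owner ℓmin ≠ Owner.final)
    (hmin : ∀ ℓ : G.Loc, G.price ℓmin ≤ G.price ℓ)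
    (r : ℝ) (hr0 : 0 < r) (hr1 : r ≤ 1)
    (hfo : (G.GLr (singLoc G ℓmin) r).FinitelyOptimal r)
    (I : Set ℝ) (hI : I ⊆ Set.Icc 0 r) (hns : ∃ u ∈ I, ∃ v ∈ I, u ≠ v)
    (hIint : ∀ u ∈ I, ∀ v ∈ I, Set.Icc u v ⊆ I)
    (α β : ℝ) (hα : -(G.price ℓmin : ℝ) < α)
    (haff : ∀ ν ∈ I, (G.GLr (singLoc G ℓmin) r).val (Sum.inl ℓmin, ν) =
      ((α * ν + β : ℝ) : EReal)) :
    ∃ f ∈ G.FF, ∀ ν ∈ I,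
      (G.GLr (singLoc G ℓmin) r).val (Sum.inl ℓmin, ν) = ((f ν : ℝ) : EReal) :=
  affine_piece_from_FF_general G hwf hsptg ℓmin hℓf hmin r hr0 hr1 hfo I hI hns hIint α β hα haff

end PTGPaper
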